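/- arXiv:2310.17616 — 2 statements merged into one kernel-verified Lean document; each statement's English description precedes it below -/
import Mathlib

section
/- Assuming the assertion language is impredicative (assertions may quantify over assertions and may embed meta-logic propositions, in particular provability of Hoare triples, as conjuncts), the existential rule is admissible in the deeply embedded Hoare logic: if for every x of type T we have ⊢ {P(x)} c {Q, [R⃗]}, then ⊢ {∃x. P(x)} c {Q, [R⃗]}. The proof goes by induction on the syntax tree of c, using the inversion rules for each command constructor. -/
/- Deeply embedded Hoare logic for the While-CF language.
   States map program variables to integers, assertions are shallowly
   embedded as state predicates, and the provability judgment
   `Provable P c Q Rb Rc` (⊢ {P} c {Q, [Rb, Rc]}) is generated by exactly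
   the primary rules: skip, break, continue, assign, seq, if, loop,
   consequence. -/

abbrev PState := String → Int
abbrev Expr := PState → Int
abbrev Assertion := PState → Prop

inductive Com : Type where
  | skip : Com
  | brk : Com
  | cont : Com
  | assign : String → Expr → Com
  | seq : Com → Com → Com
  | ifc : Expr → Com → Com → Com
  /-- `forloop c1 c2` is the C-style loop `for(;; c2) c1` with body `c1`
      and increment step `c2`. -/
  | forloop : Com → Com → Com

def updV (σ : PState) (x : String) (v : Int) : PState :=
  fun y => if y = x then v else σ y

def aBot : Assertion := fun _ => False

def Entails (P Q : Assertion) : Prop := ∀ σ, P σ → Q σ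

/-- `Provable P c Q Rb Rc` is the deeply embedded judgment
    ⊢ {P} c {Q, [Rb, Rc]}, with normal postcondition `Q`, break
    postcondition `Rb` and continue postcondition `Rc`. -/
inductive Provable : Assertion → Com → Assertion → Assertion → Assertion → Prop where
  | skip (P : Assertion) : Provable P .skip P aBot aBot
  | brk (P : Assertion) : Provable P .brk aBot P aBot
  | cont (P : Assertion) : Provable P .cont aBot aBot P
  | assign (P : Assertion) (x : String) (e : Expr) :
      Provable (fun σ => P (updV σ x (e σ))) (.assign x e) P aBot aBot
  | seq (P Q' Q Rb Rc : Assertion) (c1 c2 : Com) :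
      Provable P c1 Q' Rb Rc → Provable Q' c2 Q Rb Rc →
      Provable P (.seq c1 c2) Q Rb Rc
  | ifc (P Q Rb Rc : Assertion) (e : Expr) (c1 c2 : Com) :
      Provable (fun σ => P σ ∧ e σ ≠ 0) c1 Q Rb Rc →
      Provable (fun σ => P σ ∧ e σ = 0) c2 Q Rb Rc →
      Provable P (.ifc e c1 c2) Q Rb Rc
  | loop (P I Q : Assertion) (c1 c2 : Com) :
      Provable P c1 I Q I → Provable I c2 P Q aBot →
      Provable P (.forloop c1 c2) Q aBot aBot
  | conseq (P P' Q Q' Rb Rb' Rc Rc' : Assertion) (c : Com) :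
      Provable P' c Q' Rb' Rc' →
      Entails P P' → Entails Q' Q → Entails Rb' Rb → Entails Rc' Rc →
      Provable P c Q Rb Rc

lemma skip_inv {P Q Rb Rc} (h : Provable P .skip Q Rb Rc) : Entails P Q := by
  generalize hE : Com.skip = c0 at h
  induction h <;> try cases hE
  · exact fun σ hσ => hσ
  case conseq =>
    rename_i hP hQ hRb hRc hd ih
    exact fun σ hσ => hQ _ (ih rfl _ (hP _ hσ))

lemma brk_inv {P Q Rb Rc} (h : Provable P .brk Q Rb Rc) : Entails P Rb := by
  generalize hE : Com.brk = c0 at h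
  induction h <;> try cases hE
  · exact fun σ hσ => hσ
  case conseq =>
    rename_i hP hQ hRb hRc hd ih
    exact fun σ hσ => hRb _ (ih rfl _ (hP _ hσ))

lemma cont_inv {P Q Rb Rc} (h : Provable P .cont Q Rb Rc) : Entails P Rc := by
  generalize hE : Com.cont = c0 at h
  induction h <;> try cases hE
  · exact fun σ hσ => hσ
  case conseq =>
    rename_i hP hQ hRb hRc hd ih
    exact fun σ hσ => hRc _ (ih rfl _ (hP _ hσ))

lemma assign_inv {P Q Rb Rc x e} (h : Provable P (.assign x e) Q Rb Rc) :
    Entails P (fun σ => Q (updV σ x (e σ))) := by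
  generalize hE : Com.assign x e = c0 at h
  induction h generalizing x e <;> try cases hE
  · exact fun σ hσ => hσ
  case conseq =>
    rename_i hP hQ hRb hRc hd ih
    exact fun σ hσ => hQ _ (ih rfl _ (hP _ hσ))

lemma seq_inv {P Q Rb Rc c1 c2} (h : Provable P (.seq c1 c2) Q Rb Rc) :
    ∃ M, Provable P c1 M Rb Rc ∧ Provable M c2 Q Rb Rc := by
  generalize hE : Com.seq c1 c2 = c0 at h
  induction h generalizing c1 c2 <;> try cases hE
  case seq h1 h2 _ _ => exact ⟨_, h1, h2⟩
  case conseq =>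
    rename_i hP hQ hRb hRc hd ih
    obtain ⟨M, hm1, hm2⟩ := ih rfl
    exact ⟨M, .conseq _ _ _ _ _ _ _ _ _ hm1 hP (fun _ h => h) hRb hRc,
      .conseq _ _ _ _ _ _ _ _ _ hm2 (fun _ h => h) hQ hRb hRc⟩

lemma ifc_inv {P Q Rb Rc e c1 c2} (h : Provable P (.ifc e c1 c2) Q Rb Rc) :
    Provable (fun σ => P σ ∧ e σ ≠ 0) c1 Q Rb Rc ∧
    Provable (fun σ => P σ ∧ e σ = 0) c2 Q Rb Rc := by
  generalize hE : Com.ifc e c1 c2 = c0 at h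
  induction h generalizing e c1 c2 <;> try cases hE
  case ifc h1 h2 _ _ => exact ⟨h1, h2⟩
  case conseq =>
    rename_i hP hQ hRb hRc hd ih
    obtain ⟨h1, h2⟩ := ih rfl
    exact ⟨.conseq _ _ _ _ _ _ _ _ _ h1 (fun σ hh => ⟨hP σ hh.1, hh.2⟩) hQ hRb hRc,
      .conseq _ _ _ _ _ _ _ _ _ h2 (fun σ hh => ⟨hP σ hh.1, hh.2⟩) hQ hRb hRc⟩

lemma loop_inv {P Q Rb Rc c1 c2} (h : Provable P (.forloop c1 c2) Q Rb Rc) :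
    ∃ P' I, Entails P P' ∧ Provable P' c1 I Q I ∧ Provable I c2 P' Q aBot := by
  generalize hE : Com.forloop c1 c2 = c0 at h
  induction h generalizing c1 c2 <;> try cases hE
  case loop h1 h2 _ _ => exact ⟨_, _, fun _ h => h, h1, h2⟩
  case conseq =>
    rename_i hP hQ hRb hRc hd ih
    obtain ⟨P', I, hPP', h1, h2⟩ := ih rfl
    exact ⟨P', I, fun σ hσ => hPP' _ (hP _ hσ),
      .conseq _ _ _ _ _ _ _ _ _ h1 (fun _ h => h) (fun _ h => h) hQ (fun _ h => h),
      .conseq _ _ _ _ _ _ _ _ _ h2 (fun _ h => h) (fun _ h => h) hQ (fun _ h => h)⟩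

/-- Key lemma: the "strongest provable precondition" assertion
    `∃ P', (⊢ {P'} c {Q,[Rb,Rc]}) ∧ P'` is itself a valid precondition. -/
lemma ex_pre (c : Com) : ∀ Q Rb Rc : Assertion,
    Provable (fun σ => ∃ P', Provable P' c Q Rb Rc ∧ P' σ) c Q Rb Rc := by
  induction c with
  | skip =>
    intro Q Rb Rc
    refine .conseq _ _ _ _ _ _ _ _ _ (.skip _) (fun _ h => h)
      (fun σ hσ => ?_) (fun _ h => h.elim) (fun _ h => h.elim)
    obtain ⟨P', hp, hσ⟩ := hσ
    exact skip_inv hp σ hσ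
  | brk =>
    intro Q Rb Rc
    refine .conseq _ _ _ _ _ _ _ _ _ (.brk _) (fun _ h => h)
      (fun _ h => h.elim) (fun σ hσ => ?_) (fun _ h => h.elim)
    obtain ⟨P', hp, hσ⟩ := hσ
    exact brk_inv hp σ hσ
  | cont =>
    intro Q Rb Rc
    refine .conseq _ _ _ _ _ _ _ _ _ (.cont _) (fun _ h => h)
      (fun _ h => h.elim) (fun _ h => h.elim) (fun σ hσ => ?_)
    obtain ⟨P', hp, hσ⟩ := hσ
    exact cont_inv hp σ hσ
  | assign x e =>
    intro Q Rb Rc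
    refine .conseq _ _ _ _ _ _ _ _ _ (.assign Q x e)
      (fun σ hσ => ?_) (fun _ h => h) (fun _ h => h.elim) (fun _ h => h.elim)
    obtain ⟨P', hp, hσ⟩ := hσ
    exact assign_inv hp σ hσ
  | seq c1 c2 ih1 ih2 =>
    intro Q Rb Rc
    refine .conseq _ _ _ _ _ _ _ _ _
      (.seq _ _ _ _ _ c1 c2
        (ih1 (fun σ => ∃ P', Provable P' c2 Q Rb Rc ∧ P' σ) Rb Rc) (ih2 Q Rb Rc))
      (fun σ hσ => ?_) (fun _ h => h) (fun _ h => h) (fun _ h => h)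
    obtain ⟨P', hp, hσ⟩ := hσ
    obtain ⟨M, h1, h2⟩ := seq_inv hp
    refine ⟨P', .conseq _ _ _ _ _ _ _ _ _ h1 (fun _ h => h)
      (fun σ hm => ⟨M, h2, hm⟩) (fun _ h => h) (fun _ h => h), hσ⟩
  | ifc e c1 c2 ih1 ih2 =>
    intro Q Rb Rc
    refine .ifc _ _ _ _ _ _ _
      (.conseq _ _ _ _ _ _ _ _ _ (ih1 Q Rb Rc) (fun σ hσ => ?_)
        (fun _ h => h) (fun _ h => h) (fun _ h => h))
      (.conseq _ _ _ _ _ _ _ _ _ (ih2 Q Rb Rc) (fun σ hσ => ?_)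
        (fun _ h => h) (fun _ h => h) (fun _ h => h))
    · obtain ⟨⟨P', hp, hσ'⟩, he⟩ := hσ
      exact ⟨_, (ifc_inv hp).1, hσ', he⟩
    · obtain ⟨⟨P', hp, hσ'⟩, he⟩ := hσ
      exact ⟨_, (ifc_inv hp).2, hσ', he⟩
  | forloop c1 c2 ih1 ih2 =>
    intro Q Rb Rc
    set PP : Assertion := fun σ => ∃ P', Provable P' (.forloop c1 c2) Q Rb Rc ∧ P' σ
      with hPP
    set I : Assertion := fun σ => ∃ I', Provable I' c2 PP Q aBot ∧ I' σ with hI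
    have hc2 : Provable I c2 PP Q aBot := ih2 PP Q aBot
    have hc1 : Provable PP c1 I Q I := by
      refine .conseq _ _ _ _ _ _ _ _ _ (ih1 I Q I) (fun σ hσ => ?_)
        (fun _ h => h) (fun _ h => h) (fun _ h => h)
      obtain ⟨P', hp, hσ'⟩ := hσ
      obtain ⟨P'', I0, hent, h1, h2⟩ := loop_inv hp
      have hP''PP : Entails P'' PP := by
        intro σ hσ
        refine ⟨P'', .conseq _ _ _ _ _ _ _ _ _
          (.loop _ _ _ _ _ h1 h2) (fun _ h => h) (fun _ h => h)
          (fun _ h => h.elim) (fun _ h => h.elim), hσ⟩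
      have hI0I : Entails I0 I := fun σ hσ =>
        ⟨I0, .conseq _ _ _ _ _ _ _ _ _ h2 (fun _ h => h) hP''PP
          (fun _ h => h) (fun _ h => h), hσ⟩
      exact ⟨P'', .conseq _ _ _ _ _ _ _ _ _ h1 (fun _ h => h) hI0I
        (fun _ h => h) hI0I, hent σ hσ'⟩
    exact .conseq _ _ _ _ _ _ _ _ _ (.loop _ _ _ _ _ hc1 hc2)
      (fun _ h => h) (fun _ h => h) (fun _ h => h.elim) (fun _ h => h.elim)

/-- hoare-ex: the existential rule is admissible in the
    deeply embedded Hoare logic.  Assertions here are shallowly embedded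
    state predicates, so the assertion language is impredicative:
    assertions may quantify over assertions and embed meta-logic
    propositions (in particular Hoare-triple provability) as conjuncts,
    as required by the paper's proof by induction on the syntax of `c`. -/
theorem hoare_ex_deep (T : Type) (P : T → Assertion) (c : Com)
    (Q Rb Rc : Assertion)
    (h : ∀ x : T, Provable (P x) c Q Rb Rc) :
    Provable (fun σ => ∃ x : T, P x σ) c Q Rb Rc := by
  exact .conseq _ _ _ _ _ _ _ _ _ (ex_pre c Q Rb Rc)
    (fun σ hσ => hσ.elim fun x hx => ⟨P x, h x, hx⟩)
    (fun _ h => h) (fun _ h => h) (fun _ h => h)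
end

section
/- Under the continuation based shallow embedding, the if-seq rule is valid: if for all continuations κ, guard(Q,skip,κ) ∧ guard(Rb,break,κ) ∧ guard(Rc,continue,κ) imply guard(P, if e then (c1;;c3) else (c2;;c3), κ), then for all κ, the same three guard hypotheses imply guard(P, (if e then c1 else c2);;c3, κ). The proof constructs a simulation relating ((if e then c1 else c2);;c3, κ) to (if e then (c1;;c3) else (c2;;c3), κ) and applies the guard simulation lemma. -/
/-- Continuation frames: `kseq c` is KSeq(c); `kloop1 c1 c2` is
    Kloop1(c1,c2) (in the loop body); `kloop2 c1 c2` is Kloop2(c1,c2)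
    (in the increment step). -/
inductive KFrame : Type where
  | kseq : Com → KFrame
  | kloop1 : Com → Com → KFrame
  | kloop2 : Com → Com → KFrame

abbrev Kont := List KFrame
abbrev Config := Com × Kont × PState

/-- The small-step reduction (c, κ, σ) →c (c', κ', σ'). -/
inductive Step : Config → Config → Prop where
  | assign (x : String) (e : Expr) (κ : Kont) (σ : PState) :
      Step (.assign x e, κ, σ) (.skip, κ, updV σ x (e σ))
  | seq (c1 c2 : Com) (κ : Kont) (σ : PState) :
      Step (.seq c1 c2, κ, σ) (c1, .kseq c2 :: κ, σ)
  | skip_seq (c : Com) (κ : Kont) (σ : PState) :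
      Step (.skip, .kseq c :: κ, σ) (c, κ, σ)
  | brk_seq (c : Com) (κ : Kont) (σ : PState) :
      Step (.brk, .kseq c :: κ, σ) (.brk, κ, σ)
  | cont_seq (c : Com) (κ : Kont) (σ : PState) :
      Step (.cont, .kseq c :: κ, σ) (.cont, κ, σ)
  | if_true (e : Expr) (c1 c2 : Com) (κ : Kont) (σ : PState) :
      e σ ≠ 0 → Step (.ifc e c1 c2, κ, σ) (c1, κ, σ)
  | if_false (e : Expr) (c1 c2 : Com) (κ : Kont) (σ : PState) :
      e σ = 0 → Step (.ifc e c1 c2, κ, σ) (c2, κ, σ)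
  | for_intro (c1 c2 : Com) (κ : Kont) (σ : PState) :
      Step (.forloop c1 c2, κ, σ)
           (.seq c1 .cont, .kloop1 c1 c2 :: κ, σ)
  | skip_loop2 (c1 c2 : Com) (κ : Kont) (σ : PState) :
      Step (.skip, .kloop2 c1 c2 :: κ, σ)
           (.seq c1 .cont, .kloop1 c1 c2 :: κ, σ)
  | cont_loop1 (c1 c2 : Com) (κ : Kont) (σ : PState) :
      Step (.cont, .kloop1 c1 c2 :: κ, σ) (c2, .kloop2 c1 c2 :: κ, σ)
  | brk_loop1 (c1 c2 : Com) (κ : Kont) (σ : PState) :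
      Step (.brk, .kloop1 c1 c2 :: κ, σ) (.skip, κ, σ)
  | brk_loop2 (c1 c2 : Com) (κ : Kont) (σ : PState) :
      Step (.brk, .kloop2 c1 c2 :: κ, σ) (.skip, κ, σ)

/-- Zero or finitely many reduction steps. -/
def MSteps : Config → Config → Prop := Relation.ReflTransGen Step

def Reducible (cfg : Config) : Prop := ∃ cfg', Step cfg cfg'

/-- `(c, κ)` has safely terminated: κ = ε and c ∈ {skip, break, continue}. -/
def Terminal (c : Com) (κ : Kont) : Prop :=
  κ = [] ∧ (c = .skip ∨ c = .brk ∨ c = .cont)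

/-- A configuration that is neither safely terminated nor reducible is
    stuck in an error. -/
def IsError (cfg : Config) : Prop :=
  ¬ Terminal cfg.1 cfg.2.1 ∧ ¬ Reducible cfg

/-- The terminal case of the weakest precondition. -/
def WPpost (Q Rb Rc : Assertion) (c : Com) (σ : PState) : Prop :=
  (c = .skip ∧ Q σ) ∨ (c = .brk ∧ Rb σ) ∨ (c = .cont ∧ Rc σ)

/-- The generating functional of the weakest precondition. -/
def WPstep (Q Rb Rc : Assertion) (X : Config → Prop) (cfg : Config) : Prop :=
  (cfg.2.1 = [] ∧ WPpost Q Rb Rc cfg.1 cfg.2.2) ∨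
  (Reducible cfg ∧ ∀ cfg', Step cfg cfg' → X cfg')

/-- σ ⊨ WP (c, κ) {Q, [Rb, Rc]}: the largest (coinductive) predicate
    closed under the terminal and preservation cases, given here as the
    union of all post-fixed points of the generating functional. -/
def WP (c : Com) (κ : Kont) (Q Rb Rc : Assertion) : Assertion := fun σ =>
  ∃ X : Config → Prop,
    (∀ cfg, X cfg → WPstep Q Rb Rc X cfg) ∧ X (c, κ, σ)

/-- A simulation relation between (command, continuation) pairs:
    Termination, Preservation, and Error cases. -/
def IsSimulation (R : Com × Kont → Com × Kont → Prop) : Prop :=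
  ∀ c1 κ1 c2 κ2, R (c1, κ1) (c2, κ2) →
    (Terminal c1 κ1 → ∀ σ, MSteps (c2, κ2, σ) (c1, κ1, σ)) ∧
    (∀ σ c1' κ1' σ', Step (c1, κ1, σ) (c1', κ1', σ') →
      ∃ c2' κ2', R (c1', κ1') (c2', κ2') ∧
        MSteps (c2, κ2, σ) (c2', κ2', σ')) ∧
    (∀ σ, IsError (c1, κ1, σ) →
      ∃ cfg, MSteps (c2, κ2, σ) cfg ∧ IsError cfg)

/-- The generating functional of the coinductive safety predicate. -/
def SafeStep (X : Config → Prop) (cfg : Config) : Prop :=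
  Terminal cfg.1 cfg.2.1 ∨
  (Reducible cfg ∧ ∀ cfg', Step cfg cfg' → X cfg')

/-- `Safe cfg`: cfg belongs to the largest set closed under the terminal
    and preservation cases (union of all post-fixed points). -/
def Safe (cfg : Config) : Prop :=
  ∃ X : Config → Prop, (∀ c, X c → SafeStep X c) ∧ X cfg

/-- `Guard P c κ` (P guards (c,κ)): from every state satisfying P, the
    configuration (c, κ, ·) is safe. -/
def Guard (P : Assertion) (c : Com) (κ : Kont) : Prop :=
  ∀ σ, P σ → Safe (c, κ, σ)

lemma safe_unfold {cfg : Config} (h : Safe cfg) : SafeStep Safe cfg := by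
  obtain ⟨X, hX, hc⟩ := h
  rcases hX _ hc with ht | ⟨hr, hs⟩
  · exact Or.inl ht
  · exact Or.inr ⟨hr, fun cfg' st => ⟨X, hX, hs _ st⟩⟩

lemma safe_step {cfg cfg' : Config} (h : Safe cfg)
    (hnt : ¬ Terminal cfg.1 cfg.2.1) (st : Step cfg cfg') : Safe cfg' := by
  rcases safe_unfold h with ht | ⟨_, hs⟩
  · exact absurd ht hnt
  · exact hs _ st

/-- the if-seq rule is valid under the continuation based
    shallow embedding: if for all continuations κ the three guard
    hypotheses on the postconditions imply
    guard(P, if e then (c1;;c3) else (c2;;c3), κ), then for all κ the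
    same guard hypotheses imply guard(P, (if e then c1 else c2);;c3, κ). -/
theorem if_seq_cont (e : Expr) (c1 c2 c3 : Com) (P Q Rb Rc : Assertion)
    (h : ∀ κ : Kont,
      Guard Q .skip κ → Guard Rb .brk κ → Guard Rc .cont κ →
      Guard P (.ifc e (.seq c1 c3) (.seq c2 c3)) κ) :
    ∀ κ : Kont,
      Guard Q .skip κ → Guard Rb .brk κ → Guard Rc .cont κ →
      Guard P (.seq (.ifc e c1 c2) c3) κ := by
  intro κ hq hb hcg σ hp
  have hS : Safe (Com.ifc e (.seq c1 c3) (.seq c2 c3), κ, σ) := h κ hq hb hcg σ hp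
  refine ⟨fun cfg => Safe cfg ∨
      (∃ κ' σ', cfg = (Com.seq (.ifc e c1 c2) c3, κ', σ') ∧
        Safe (Com.ifc e (.seq c1 c3) (.seq c2 c3), κ', σ')) ∨
      (∃ κ' σ', cfg = (Com.ifc e c1 c2, .kseq c3 :: κ', σ') ∧
        Safe (Com.ifc e (.seq c1 c3) (.seq c2 c3), κ', σ')), ?_,
    Or.inr (Or.inl ⟨κ, σ, rfl, hS⟩)⟩
  rintro cfg (hsafe | ⟨κ', σ', rfl, hS'⟩ | ⟨κ', σ', rfl, hS'⟩)
  · rcases safe_unfold hsafe with ht | ⟨hr, hs⟩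
    · exact Or.inl ht
    · exact Or.inr ⟨hr, fun cfg' st => Or.inl (hs _ st)⟩
  · refine Or.inr ⟨⟨_, Step.seq _ _ _ _⟩, ?_⟩
    intro cfg' st
    cases st
    exact Or.inr (Or.inr ⟨κ', σ', rfl, hS'⟩)
  · refine Or.inr ⟨?_, ?_⟩
    · by_cases h0 : e σ' = 0
      · exact ⟨_, Step.if_false _ _ _ _ _ h0⟩
      · exact ⟨_, Step.if_true _ _ _ _ _ h0⟩
    · intro cfg' st
      cases st with
      | if_true _ _ _ _ _ he =>
        refine Or.inl (safe_step (safe_step hS' ?_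
          (Step.if_true e _ _ κ' σ' he)) ?_ (Step.seq c1 c3 κ' σ'))
        · simp [Terminal]
        · simp [Terminal]
      | if_false _ _ _ _ _ he =>
        refine Or.inl (safe_step (safe_step hS' ?_
          (Step.if_false e _ _ κ' σ' he)) ?_ (Step.seq c2 c3 κ' σ'))
        · simp [Terminal]
        · simp [Terminal]
end
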